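/- arXiv:2201.02744 — 2 statements merged into one kernel-verified Lean document; each statement's English description precedes it below -/
import Mathlib

section
/- For any composition ω and any natural number q, the set of compositions ω' with ω ⪰ ω' (i.e., ω' = ω or ω' is obtained from ω by a finite sequence of elementary merges and inserts) and with reduced norm |ω'|' ≤ q, is finite. Consequently, any closed subposet of the poset of compositions generated by finitely many maximal elements is profinite, i.e., for every q ≥ 0 it contains only finitely many elements of reduced norm ≤ q. -/
/-- The merge operation (0-indexed at `i`): replace the adjacent entries at
positions `i` and `i+1` by their sum. -/
def mergeAt (l : List ℕ) (i : ℕ) : List ℕ :=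
  l.take i ++ [l.getD i 0 + l.getD (i + 1) 0] ++ l.drop (i + 2)

/-- The insert operation: insert a new entry `2` after the `j`-th entry. -/
def insertAt2 (l : List ℕ) (j : ℕ) : List ℕ :=
  l.take j ++ [2] ++ l.drop j

/-- One elementary operation: either a merge or an insert. -/
def ElemStep (l l' : List ℕ) : Prop :=
  (∃ i, i + 1 < l.length ∧ l' = mergeAt l i) ∨ (∃ j, j ≤ l.length ∧ l' = insertAt2 l j)

/-- `ω ⪰ ω'`: `ω'` is obtained from `ω` by a possibly empty finite sequence of
elementary merges and inserts. -/
def Below (l l' : List ℕ) : Prop := Relation.ReflTransGen ElemStep l l'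

/-- The reduced norm `|ω|'` of a composition. -/
def rnormC (l : List ℕ) : ℕ := (l.map (· - 1)).sum

/-!
Each insert adds one entry and one unit of reduced norm, and each merge removes one entry
without lowering the reduced norm. Hence `ω ⪰ ω'` forces
`length ω' ≤ length ω + |ω'|' - |ω|'`, so `|ω'|' ≤ q` bounds the length of `ω'` by
`length ω + q` and each of its entries by `q + 1`.
-/

theorem List.finite_length_le_of_forall_mem {α : Type*} {s : Set α} (hs : s.Finite) (n : ℕ) :
    {l : List α | l.length ≤ n ∧ ∀ x ∈ l, x ∈ s}.Finite := by
  have := hs.to_subtype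
  refine ((List.finite_length_le s n).image (List.map (↑))).subset ?_
  rintro l ⟨hn, hl⟩
  lift l to List s using hl
  exact ⟨l, by simpa using hn, rfl⟩

@[simp]
lemma rnormC_nil : rnormC [] = 0 := rfl

@[simp]
lemma rnormC_cons (a : ℕ) (l : List ℕ) : rnormC (a :: l) = (a - 1) + rnormC l := by
  simp [rnormC]

@[simp]
lemma rnormC_append (l₁ l₂ : List ℕ) : rnormC (l₁ ++ l₂) = rnormC l₁ + rnormC l₂ := by
  simp [rnormC]

lemma le_rnormC_add_one_of_mem {l : List ℕ} {x : ℕ} (hx : x ∈ l) : x ≤ rnormC l + 1 := by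
  have : x - 1 ≤ rnormC l := List.single_le_sum (by simp) _ (List.mem_map_of_mem hx)
  omega

lemma length_insertAt2 {l : List ℕ} {j : ℕ} (hj : j ≤ l.length) :
    (insertAt2 l j).length = l.length + 1 := by
  simp only [insertAt2, List.length_append, List.length_take, List.length_cons, List.length_drop,
    List.length_nil]
  omega

lemma rnormC_insertAt2 (l : List ℕ) (j : ℕ) : rnormC (insertAt2 l j) = rnormC l + 1 := by
  conv_rhs => rw [← l.take_append_drop j]
  simp only [insertAt2, rnormC_append, rnormC_cons, rnormC_nil]
  omega

lemma length_mergeAt {l : List ℕ} {i : ℕ} (hi : i + 1 < l.length) :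
    (mergeAt l i).length + 1 = l.length := by
  simp only [mergeAt, List.length_append, List.length_take, List.length_cons, List.length_drop,
    List.length_nil]
  omega

lemma rnormC_le_rnormC_mergeAt {l : List ℕ} {i : ℕ} (hi : i + 1 < l.length) :
    rnormC l ≤ rnormC (mergeAt l i) := by
  have hdrop : l.drop i = l[i] :: l[i + 1] :: l.drop (i + 2) := by
    rw [List.drop_eq_getElem_cons (by omega), List.drop_eq_getElem_cons hi]
  have hl : rnormC l
      = rnormC (l.take i) + (l[i] - 1) + (l[i + 1] - 1) + rnormC (l.drop (i + 2)) := by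
    conv_lhs => rw [← l.take_append_drop i, hdrop]
    simp only [rnormC_append, rnormC_cons]
    omega
  have hm : rnormC (mergeAt l i)
      = rnormC (l.take i) + (l[i] + l[i + 1] - 1) + rnormC (l.drop (i + 2)) := by
    rw [mergeAt, List.getD_eq_getElem _ _ (by omega), List.getD_eq_getElem _ _ hi]
    simp only [rnormC_append, rnormC_cons, rnormC_nil, add_zero]
  omega

lemma ElemStep.length_add_rnormC_le {l l' : List ℕ} (h : ElemStep l l') :
    l'.length + rnormC l ≤ l.length + rnormC l' := by
  rcases h with ⟨i, hi, rfl⟩ | ⟨j, hj, rfl⟩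
  · have := length_mergeAt hi
    have := rnormC_le_rnormC_mergeAt hi
    omega
  · rw [length_insertAt2 hj, rnormC_insertAt2]
    omega

lemma Below.length_add_rnormC_le {l l' : List ℕ} (h : Below l l') :
    l'.length + rnormC l ≤ l.length + rnormC l' := by
  induction h with
  | refl => rfl
  | tail _ hstep ih => have := hstep.length_add_rnormC_le; omega

lemma finite_below_rnormC_le (ω : List ℕ) (q : ℕ) :
    {ω' : List ℕ | Below ω ω' ∧ rnormC ω' ≤ q}.Finite := by
  refine (List.finite_length_le_of_forall_mem (Set.finite_Iic (q + 1)) (ω.length + q)).subset ?_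
  rintro ω' ⟨hbelow, hq⟩
  have := hbelow.length_add_rnormC_le
  exact ⟨by omega, fun x hx => (le_rnormC_add_one_of_mem hx).trans (by omega)⟩

/-- For any composition `ω` and any `q`, the set of `ω'` with `ω ⪰ ω'` and `|ω'|' ≤ q`
is finite; consequently any closed subposet generated by finitely many elements is
profinite. -/
theorem downset_finite_and_finitely_generated_profinite :
    (∀ (ω : List ℕ), (∀ x ∈ ω, 1 ≤ x) → ∀ q : ℕ,
      {ω' : List ℕ | Below ω ω' ∧ rnormC ω' ≤ q}.Finite) ∧
    (∀ (S : Finset (List ℕ)), (∀ ω ∈ S, ∀ x ∈ ω, 1 ≤ x) → ∀ q : ℕ,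
      {ω' : List ℕ | (∃ ω ∈ S, Below ω ω') ∧ rnormC ω' ≤ q}.Finite) := by
  refine ⟨fun ω _ q => finite_below_rnormC_le ω q, fun S _ q => ?_⟩
  refine (S.finite_toSet.biUnion fun ω _ => finite_below_rnormC_le ω q).subset ?_
  rintro ω' ⟨⟨ω, hω, hbelow⟩, hq⟩
  exact Set.mem_biUnion hω ⟨hbelow, hq⟩
end

section
/- Fix d ≥ 0 and a finite multiset D of real numbers (a finite set of real numbers r each with a prescribed multiplicity m_r ≥ 1). Then the set of monic real polynomials P of degree d whose real roots, counted with multiplicity, are given exactly by D (i.e., for each real u, the multiplicity of u as a root of P equals the multiplicity of u in D) is a convex subset of the real vector space of polynomials: if P₀ and P₁ both belong to this set and t ∈ [0,1], then (1−t)P₀ + tP₁ also belongs to it. -/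
/-!
With `R = ∏_{r ∈ D} (X - r)`, each `Pᵢ` factors as `R * Qᵢ` where `Qᵢ` is monic without real
roots, hence positive on `ℝ`. Then `(1 - t) • P₀ + t • P₁ = R * ((1 - t) • Q₀ + t • Q₁)`, and the
second factor is still positive, so the real roots remain exactly `D`. Monicity and degree
survive because the weights sum to `1`.
-/

open Polynomial

namespace Polynomial

theorem roots_eq_iff_forall_rootMultiplicity_eq {R : Type*} [CommRing R] [IsDomain R]
    [DecidableEq R] (P : R[X]) (D : Multiset R) :
    P.roots = D ↔ ∀ u, rootMultiplicity u P = D.count u := by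
  simp only [Multiset.ext, count_roots]

theorem Monic.smul_add_smul {R : Type*} [Semiring R] [Nontrivial R] {P Q : R[X]}
    (hP : P.Monic) (hQ : Q.Monic) (hPQ : P.natDegree = Q.natDegree) {a b : R}
    (hab : a + b = 1) :
    (a • P + b • Q).Monic ∧ (a • P + b • Q).natDegree = P.natDegree := by
  have hle : (a • P + b • Q).natDegree ≤ P.natDegree :=
    natDegree_add_le_of_degree_le ((natDegree_smul_le _ _).trans le_rfl)
      ((natDegree_smul_le _ _).trans hPQ.ge)
  have hcoeff : (a • P + b • Q).coeff P.natDegree = 1 := by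
    rw [coeff_add, coeff_smul, coeff_smul, hP.coeff_natDegree, hPQ, hQ.coeff_natDegree]
    simpa using hab
  exact ⟨monic_of_natDegree_le_of_coeff_eq_one _ hle hcoeff,
    natDegree_eq_of_le_of_coeff_ne_zero hle (hcoeff ▸ one_ne_zero)⟩

theorem convex_setOf_forall_eval_pos {𝕜 : Type*} [Field 𝕜] [LinearOrder 𝕜]
    [IsStrictOrderedRing 𝕜] : Convex 𝕜 {Q : 𝕜[X] | ∀ x, 0 < Q.eval x} := by
  intro Q₀ h₀ Q₁ h₁ a b ha hb hab x
  simpa using convex_Ioi (0 : 𝕜) (h₀ x) (h₁ x) ha hb hab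

theorem Monic.exists_prod_roots_mul_eq_of_eval_pos {P : ℝ[X]} (hP : P.Monic) :
    ∃ Q : ℝ[X], (P.roots.map (X - C ·)).prod * Q = P ∧ ∀ x, 0 < Q.eval x := by
  obtain ⟨Q, hPQ, -, hQ⟩ := exists_prod_multiset_X_sub_C_mul P
  have hQm : Q.Monic := (monic_multisetProd_X_sub_C _).of_mul_monic_left (hPQ ▸ hP)
  refine ⟨Q, hPQ, fun x => zero_lt_eval_of_roots_lt_of_leadingCoeff_nonneg
    (fun y hy => ?_) (by rw [hQm.leadingCoeff]; exact zero_le_one)⟩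
  simpa [hQ] using (mem_roots hQm.ne_zero).mpr hy

end Polynomial

/-- The set of monic real polynomials of degree `d` whose real roots counted with
multiplicity are given exactly by a fixed finite multiset `D` is convex: a convex
combination of two such polynomials is again one. -/
theorem convexity_of_fixed_real_divisor (d : ℕ) (D : Multiset ℝ)
    (P₀ P₁ : Polynomial ℝ)
    (h₀ : P₀.Monic ∧ P₀.natDegree = d ∧ ∀ u : ℝ, rootMultiplicity u P₀ = D.count u)
    (h₁ : P₁.Monic ∧ P₁.natDegree = d ∧ ∀ u : ℝ, rootMultiplicity u P₁ = D.count u)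
    (t : ℝ) (ht : t ∈ Set.Icc (0 : ℝ) 1) :
    ((1 - t) • P₀ + t • P₁).Monic ∧ ((1 - t) • P₀ + t • P₁).natDegree = d ∧
      ∀ u : ℝ, rootMultiplicity u ((1 - t) • P₀ + t • P₁) = D.count u := by
  obtain ⟨hm₀, rfl, hr₀⟩ := h₀
  obtain ⟨hm₁, hd₁, hr₁⟩ := h₁
  rw [← roots_eq_iff_forall_rootMultiplicity_eq] at hr₀ hr₁ ⊢
  obtain ⟨Q₀, hPQ₀, hpos₀⟩ := hm₀.exists_prod_roots_mul_eq_of_eval_pos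
  obtain ⟨Q₁, hPQ₁, hpos₁⟩ := hm₁.exists_prod_roots_mul_eq_of_eval_pos
  rw [hr₀] at hPQ₀
  rw [hr₁] at hPQ₁
  obtain ⟨hmonic, hdeg⟩ := hm₀.smul_add_smul hm₁ hd₁.symm (sub_add_cancel 1 t)
  refine ⟨hmonic, hdeg, ?_⟩
  have hpos : ∀ x, 0 < ((1 - t) • Q₀ + t • Q₁).eval x :=
    convex_setOf_forall_eval_pos hpos₀ hpos₁ (sub_nonneg.mpr ht.2) ht.1 (sub_add_cancel 1 t)
  have hroots : ((1 - t) • Q₀ + t • Q₁).roots = 0 :=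
    Multiset.eq_zero_of_forall_notMem fun x hx => (hpos x).ne' (isRoot_of_mem_roots hx)
  rw [← hPQ₀, ← hPQ₁, ← mul_smul_comm, ← mul_smul_comm, ← mul_add, roots_mul,
    roots_multiset_prod_X_sub_C, hroots, add_zero]
  exact mul_ne_zero (monic_multisetProd_X_sub_C D).ne_zero fun h => by simpa [h] using hpos 0
end
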